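/- arXiv:1004.3619 — 3 statements merged into one kernel-verified Lean document; each statement's English description precedes it below -/
import Mathlib

section
/- Let p be a prime, let G be a residually p group, and let H be a retract of G, i.e. there exists a homomorphism φ : G → G with φ(G) ≤ H and φ(h) = h for all h ∈ H. Then the lower central p-filtration of G separates H: the intersection over all n ≥ 1 of the subgroups γᵖ_n(G)·H equals H (here γᵖ_n(G)·H = γᵖ_n(G) ⊔ H is a subgroup since γᵖ_n(G) is normal in G). -/
/-- The subgroup generated by the `p`-th powers of the elements of `K`. -/
def subgroupPPow {G : Type*} [Group G] (K : Subgroup G) (p : ℕ) : Subgroup G :=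
  Subgroup.closure ((fun x => x ^ p) '' (K : Set G))

/-- The lower central `p`-filtration of a subgroup `K` (as subgroups of the ambient
group), indexed so that `gammaP p K (n-1)` is `γᵖ_n(K)`:
`γᵖ_1(K) = K` and `γᵖ_{n+1}(K) = [K, γᵖ_n(K)]·(γᵖ_n(K))ᵖ`. -/
def gammaP (p : ℕ) {G : Type*} [Group G] (K : Subgroup G) : ℕ → Subgroup G
  | 0 => K
  | n + 1 => ⁅K, gammaP p K n⁆ ⊔ subgroupPPow (gammaP p K n) p

/-- A group `G` is residually `p` if every nontrivial element avoids some normal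
subgroup of `p`-power index. -/
def IsResiduallyP (p : ℕ) (G : Type*) [Group G] : Prop :=
  ∀ g : G, g ≠ 1 → ∃ N : Subgroup G, N.Normal ∧ (∃ k : ℕ, N.index = p ^ k) ∧ g ∉ N

/-!
Write `g ∈ γᵖ_n(G)·H` as `g = c h`. Since `φ` fixes `H` and maps `γᵖ_n(G)` into itself,
`g φ(g)⁻¹ = c φ(c)⁻¹ ∈ γᵖ_n(G)`. So if `g` lies in every `γᵖ_n(G)·H`, then `g φ(g)⁻¹` lies in
`⋂ₙ γᵖ_n(G)`, which is trivial in a residually `p` group: the filtration of a finite `p`-group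
reaches `1` (quotient by a central subgroup of order `p` and induct on the order), and `γᵖ_n(G)`
maps onto `γᵖ_n` of each finite `p`-quotient. Hence `g = φ(g) ∈ H`.
-/

section

open Subgroup

variable {G G' : Type*} [Group G] [Group G'] {p : ℕ}

lemma subgroupPPow_mono {K K' : Subgroup G} (h : K ≤ K') (p : ℕ) :
    subgroupPPow K p ≤ subgroupPPow K' p :=
  closure_mono (Set.image_mono h)

lemma map_subgroupPPow (f : G →* G') (K : Subgroup G) (p : ℕ) :
    (subgroupPPow K p).map f = subgroupPPow (K.map f) p := by
  simp only [subgroupPPow, MonoidHom.map_closure, coe_map, Set.image_image, map_pow]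

lemma subgroupPPow_eq_bot_iff {K : Subgroup G} : subgroupPPow K p = ⊥ ↔ ∀ x ∈ K, x ^ p = 1 := by
  simp [subgroupPPow, closure_eq_bot_iff, Set.subset_def]

lemma gammaP_map (f : G →* G') (K : Subgroup G) (n : ℕ) :
    (gammaP p K n).map f = gammaP p (K.map f) n := by
  induction n with
  | zero => rfl
  | succ n ih => rw [gammaP, gammaP, Subgroup.map_sup, map_commutator, map_subgroupPPow, ih]

lemma gammaP_mono {K K' : Subgroup G} (h : K ≤ K') (n : ℕ) : gammaP p K n ≤ gammaP p K' n := by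
  induction n with
  | zero => exact h
  | succ n ih => exact sup_le_sup (commutator_mono h ih) (subgroupPPow_mono ih p)

lemma gammaP_top_map_le (f : G →* G) (n : ℕ) :
    (gammaP p (⊤ : Subgroup G) n).map f ≤ gammaP p ⊤ n :=
  (gammaP_map f ⊤ n).trans_le (gammaP_mono le_top n)

instance gammaP_top_characteristic (n : ℕ) : (gammaP p (⊤ : Subgroup G) n).Characteristic :=
  characteristic_iff_map_le.mpr fun ϕ => gammaP_top_map_le ϕ.toMonoidHom n

lemma gammaP_top_map_of_surjective {f : G →* G'} (hf : Function.Surjective f) (n : ℕ) :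
    (gammaP p (⊤ : Subgroup G) n).map f = gammaP p ⊤ n := by
  rw [gammaP_map, map_top_of_surjective f hf]

lemma gammaP_top_le_iff_quotient {N : Subgroup G} [N.Normal] {n : ℕ} :
    gammaP p (⊤ : Subgroup G) n ≤ N ↔ gammaP p (⊤ : Subgroup (G ⧸ N)) n = ⊥ := by
  rw [← gammaP_top_map_of_surjective (QuotientGroup.mk'_surjective N), Subgroup.map_eq_bot_iff,
    QuotientGroup.ker_mk']

lemma gammaP_top_succ_eq_bot_iff {n : ℕ} :
    gammaP p (⊤ : Subgroup G) (n + 1) = ⊥ ↔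
      gammaP p ⊤ n ≤ center G ∧ ∀ x ∈ gammaP p (⊤ : Subgroup G) n, x ^ p = 1 := by
  rw [gammaP, sup_eq_bot_iff, commutator_top_left_eq_bot_iff_le_center, subgroupPPow_eq_bot_iff]

lemma IsPGroup.exists_mem_center_orderOf_eq [Fact p.Prime] [Finite G] [Nontrivial G]
    (hG : IsPGroup p G) : ∃ z ∈ center G, orderOf z = p := by
  have := hG.center_nontrivial
  obtain ⟨z, hz⟩ := exists_prime_orderOf_dvd_card' (G := center G) p
    ((hG.to_subgroup _).card_eq_or_dvd.resolve_left Finite.one_lt_card.ne')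
  exact ⟨z, z.2, (orderOf_coe z).trans hz⟩

theorem IsPGroup.exists_gammaP_top_eq_bot [Fact p.Prime] [Finite G] (hG : IsPGroup p G) :
    ∃ n, gammaP p (⊤ : Subgroup G) n = ⊥ := by
  induction hc : Nat.card G using Nat.strong_induction_on generalizing G with
  | _ c ih =>
  rcases subsingleton_or_nontrivial G with _ | _
  · exact ⟨0, eq_bot_of_subsingleton _⟩
  obtain ⟨z, hz, hzp⟩ := hG.exists_mem_center_orderOf_eq
  set Z := zpowers z
  have hZ : Z ≤ center G := zpowers_le.mpr hz
  have : Z.Normal := ⟨fun x hx g => by rwa [mem_center_iff.mp (hZ hx) g, mul_inv_cancel_right]⟩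
  have hcard : Nat.card (G ⧸ Z) < c := by
    rw [← hc, ← Z.card_mul_index, index_eq_card, Nat.card_zpowers, hzp]
    exact lt_mul_left Nat.card_pos (Fact.out : p.Prime).one_lt
  obtain ⟨n, hn⟩ := ih _ hcard (hG.to_quotient Z) rfl
  have hle : gammaP p (⊤ : Subgroup G) n ≤ Z := gammaP_top_le_iff_quotient.mpr hn
  refine ⟨n + 1, gammaP_top_succ_eq_bot_iff.mpr ⟨hle.trans hZ, fun x hx => ?_⟩⟩
  rw [← orderOf_dvd_iff_pow_eq_one, ← hzp]
  exact orderOf_dvd_of_mem_zpowers (hle hx)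

theorem IsResiduallyP.iInf_gammaP_top_eq_bot [Fact p.Prime] (hG : IsResiduallyP p G) :
    ⨅ n, gammaP p (⊤ : Subgroup G) n = ⊥ := by
  refine (eq_bot_iff_forall _).mpr fun g hg => by_contra fun hg1 => ?_
  obtain ⟨N, hN, ⟨k, hk⟩, hgN⟩ := hG g hg1
  have : Finite (G ⧸ N) := Nat.finite_of_card_ne_zero <| by
    rw [← index_eq_card, hk]
    exact pow_ne_zero _ (Fact.out : p.Prime).ne_zero
  obtain ⟨n, hn⟩ := (IsPGroup.of_card (N.index_eq_card.symm.trans hk)).exists_gammaP_top_eq_bot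
  exact hgN (gammaP_top_le_iff_quotient.mpr hn (mem_iInf.mp hg n))

lemma mul_inv_apply_mem_of_mem_sup {N H : Subgroup G} [N.Normal] {φ : G →* G}
    (hN : N.map φ ≤ N) (hφ : ∀ h ∈ H, φ h = h) {g : G} (hg : g ∈ N ⊔ H) : g * (φ g)⁻¹ ∈ N := by
  rw [← SetLike.mem_coe, normal_mul] at hg
  obtain ⟨c, hc, h, hh, rfl⟩ := hg
  have : c * h * (φ (c * h))⁻¹ = c * (φ c)⁻¹ := by rw [map_mul, hφ h hh]; group
  rw [this]
  exact mul_mem hc (inv_mem (hN (mem_map_of_mem φ hc)))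

end

/-- If `G` is residually `p` and `H` is a retract of `G`, then the lower central
`p`-filtration of `G` separates `H`: `⋂_{n ≥ 1} γᵖ_n(G)·H = H`. -/
theorem lowerCentralPSeries_separates_retract {G : Type*} [Group G] (p : ℕ)
    (hp : p.Prime) (hres : IsResiduallyP p G) (H : Subgroup G) (φ : G →* G)
    (hrange : φ.range ≤ H) (hid : ∀ h ∈ H, φ h = h) :
    (⨅ n : ℕ, gammaP p (⊤ : Subgroup G) n ⊔ H) = H := by
  have : Fact p.Prime := ⟨hp⟩
  refine le_antisymm (fun g hg => ?_) (le_iInf fun _ => le_sup_right)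
  have hfixed : g * (φ g)⁻¹ = 1 := by
    rw [← Subgroup.mem_bot, ← hres.iInf_gammaP_top_eq_bot, Subgroup.mem_iInf]
    exact fun n =>
      mul_inv_apply_mem_of_mem_sup (gammaP_top_map_le φ n) hid (Subgroup.mem_iInf.mp hg n)
  rw [mul_inv_eq_one.mp hfixed]
  exact hrange ⟨g, rfl⟩
end

section
/- Let p be a prime, d ≥ 1, and let R be a nonzero commutative ring of characteristic p^d. Let n ≥ 1 with p ≥ n. Then: (i) every upper unitriangular n×n matrix M over R (i.e. M_{jj} = 1 for all j and M_{jk} = 0 for j > k) satisfies M^(p^d) = I, so the group UT₁(n, R) of upper unitriangular matrices has exponent dividing p^d. (ii) If N is a strictly upper triangular n×n matrix over R (N_{jk} = 0 for j ≥ k) and there is k with 1 ≤ k ≤ n−1 such that all entries of the codiagonals of N of index < k vanish (i.e. N_{j, j+l} = 0 for all l < k and all j) while some entry N_{j, j+k} of the k-th codiagonal is a unit of R, then the matrix M = I + N has multiplicative order exactly p^d. -/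
/-! In characteristic `p ^ d` every binomial coefficient `(p ^ d).choose i` with `0 < i < p` vanishes,
because `i` is prime to `p`. Hence `(1 + x) ^ p ^ d = 1` whenever `x ^ p = 0`, which applies to the
strictly upper triangular part `N` of a unitriangular matrix since `N ^ n = 0` and `n ≤ p`.
If the first nonzero codiagonal of `N` is the `k`-th one, then on that codiagonal `(1 + N) ^ m`
agrees with `1 + m • N`, as `N ^ i` vanishes below the `i k`-th codiagonal. A unit entry there
therefore forbids `(1 + N) ^ p ^ (d - 1) = 1`, because `p ^ (d - 1) ≠ 0` in `R`. -/

theorem Nat.dvd_choose_of_coprime {m i : ℕ} (hi : i ≠ 0) (hmi : m.Coprime i) : m ∣ m.choose i := by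
  obtain ⟨i, rfl⟩ := Nat.exists_eq_succ_of_ne_zero hi
  rcases m with _ | m
  · simp
  · exact hmi.dvd_of_dvd_mul_right (Dvd.intro _ (Nat.add_one_mul_choose_eq m i))

theorem Nat.Prime.pow_dvd_choose_pow {p d i : ℕ} (hp : p.Prime) (hi : i ≠ 0) (hip : i < p) :
    p ^ d ∣ (p ^ d).choose i :=
  Nat.dvd_choose_of_coprime hi ((Nat.coprime_of_lt_prime hi hip hp).pow_left d)

theorem one_add_pow_prime_pow_eq_one {A : Type*} [Ring A] {p d : ℕ} (hp : p.Prime)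
    (hA : ((p ^ d : ℕ) : A) = 0) {x : A} (hx : x ^ p = 0) : (1 + x) ^ p ^ d = 1 := by
  rw [add_comm, (Commute.one_right x).add_pow, Finset.sum_eq_single 0]
  · simp
  · intro i _ hi
    rcases lt_or_ge i p with hip | hpi
    · obtain ⟨c, hc⟩ := hp.pow_dvd_choose_pow (d := d) hi hip
      rw [hc, Nat.cast_mul, hA, zero_mul, mul_zero]
    · rw [pow_eq_zero_of_le hpi hx, zero_mul, zero_mul]
  · simp

namespace Matrix

theorem natCast_eq_zero_of_charP {ι R : Type*} [Fintype ι] [DecidableEq ι] [CommSemiring R]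
    (p : ℕ) [CharP R p] : (p : Matrix ι ι R) = 0 := by
  rw [← map_natCast (algebraMap R (Matrix ι ι R)), CharP.cast_eq_zero, map_zero]

variable {R : Type*} [Semiring R] {n : ℕ}

/-- `k = 0`: upper triangular; `k = 1`: strictly upper triangular. -/
def ZeroBelowCodiag (k : ℕ) (N : Matrix (Fin n) (Fin n) R) : Prop :=
  ∀ i j : Fin n, (j : ℕ) < i + k → N i j = 0

namespace ZeroBelowCodiag

variable {k l : ℕ} {N M : Matrix (Fin n) (Fin n) R}

theorem mono (hN : ZeroBelowCodiag k N) (hlk : l ≤ k) : ZeroBelowCodiag l N :=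
  fun i j hij => hN i j (by omega)

theorem one : ZeroBelowCodiag 0 (1 : Matrix (Fin n) (Fin n) R) :=
  fun i j hij => one_apply_ne (Fin.ne_of_val_ne (by omega))

theorem mul (hN : ZeroBelowCodiag k N) (hM : ZeroBelowCodiag l M) :
    ZeroBelowCodiag (k + l) (N * M) := by
  intro i j hij
  rw [mul_apply]
  refine Finset.sum_eq_zero fun m _ => ?_
  rcases lt_or_ge (m : ℕ) (i + k) with him | him
  · rw [hN i m him, zero_mul]
  · rw [hM m j (by omega), mul_zero]

theorem pow (hN : ZeroBelowCodiag k N) (m : ℕ) : ZeroBelowCodiag (m * k) (N ^ m) := by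
  induction m with
  | zero => simpa using one (R := R) (n := n)
  | succ m ih => simpa [pow_succ, Nat.succ_mul] using ih.mul hN

theorem eq_zero (hN : ZeroBelowCodiag k N) (hk : n ≤ k) : N = 0 :=
  ext fun i j => hN i j (by omega)

theorem pow_eq_zero (hN : ZeroBelowCodiag 1 N) {m : ℕ} (hm : n ≤ m) : N ^ m = 0 :=
  (hN.pow m).eq_zero (by simpa using hm)

theorem one_add_pow_apply (hN : ZeroBelowCodiag k N) (hk : 0 < k) {i j : Fin n}
    (hij : (j : ℕ) = i + k) (m : ℕ) : ((1 + N) ^ m) i j = m * N i j := by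
  have hterm (l : ℕ) : (N ^ l * 1 ^ (m - l) * (m.choose l : Matrix (Fin n) (Fin n) R)) i j =
      m.choose l * (N ^ l) i j := by
    rw [one_pow, mul_one, ← Nat.cast_comm, ← nsmul_eq_mul, smul_apply, nsmul_eq_mul]
  rw [add_comm, (Commute.one_right N).add_pow, sum_apply, Finset.sum_congr rfl fun l _ => hterm l,
    Finset.sum_eq_single 1]
  · simp
  · intro l _ hl
    rcases Nat.lt_or_ge l 2 with hl2 | hl2
    · obtain rfl : l = 0 := by omega
      simp [one_apply_ne (Fin.ne_of_val_ne (by omega) : i ≠ j)]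
    · rw [(hN.pow l).mono (l := k + 1) (by nlinarith) i j (by omega), mul_zero]
  · intro h
    simp_all

end ZeroBelowCodiag

end Matrix

open Matrix

theorem unitriangular_order_general (p d : ℕ) (hp : p.Prime) (hd : 1 ≤ d)
    (R : Type*) [CommRing R] [CharP R (p ^ d)]
    (n : ℕ) (hnp : n ≤ p) :
    (∀ M : Matrix (Fin n) (Fin n) R,
      (∀ j, M j j = 1) → (∀ j k : Fin n, (k : ℕ) < (j : ℕ) → M j k = 0) →
      M ^ p ^ d = 1) ∧
    (∀ (N : Matrix (Fin n) (Fin n) R) (k : ℕ), 1 ≤ k → k ≤ n - 1 →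
      (∀ j j' : Fin n, (j' : ℕ) < (j : ℕ) + k → N j j' = 0) →
      (∃ j j' : Fin n, (j' : ℕ) = (j : ℕ) + k ∧ IsUnit (N j j')) →
      orderOf (1 + N) = p ^ d) := by
  have hunipotent {N : Matrix (Fin n) (Fin n) R} (hN : ZeroBelowCodiag 1 N) :
      (1 + N) ^ p ^ d = 1 :=
    one_add_pow_prime_pow_eq_one hp (natCast_eq_zero_of_charP _) (hN.pow_eq_zero hnp)
  refine ⟨fun M hdiag hlower => ?_, fun N k hk _ hN ⟨i, j, hij, hunit⟩ => ?_⟩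
  · rw [← add_sub_cancel 1 M]
    refine hunipotent fun i j hij => ?_
    rcases lt_or_eq_of_le (Nat.lt_succ_iff.mp hij) with hji | hji
    · rw [Matrix.sub_apply, hlower i j hji, one_apply_ne (Fin.ne_of_val_ne hji.ne'), sub_zero]
    · simp [Fin.ext hji, hdiag]
  · obtain ⟨e, rfl⟩ : ∃ e, d = e + 1 := ⟨d - 1, by omega⟩
    have := Fact.mk hp
    refine orderOf_eq_prime_pow (fun hpow => ?_) (hunipotent (ZeroBelowCodiag.mono hN hk))
    have hentry := congrFun (congrFun hpow i) j
    rw [ZeroBelowCodiag.one_add_pow_apply hN hk hij,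
      one_apply_ne (Fin.ne_of_val_ne (by omega)), hunit.mul_left_eq_zero,
      CharP.cast_eq_zero_iff R (p ^ (e + 1)), Nat.pow_dvd_pow_iff_le_right hp.one_lt] at hentry
    omega

/-- Let `R` be a nonzero commutative ring of characteristic `p^d` (`p` prime,
`d ≥ 1`) and `1 ≤ n ≤ p`. Then (i) every upper unitriangular `n × n` matrix over
`R` satisfies `M^(p^d) = 1`, so `UT₁(n, R)` has exponent dividing `p^d`; and
(ii) if `N` is a strictly upper triangular matrix all of whose codiagonals of
index `< k` vanish (for some `1 ≤ k ≤ n - 1`) while some entry of the `k`-th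
codiagonal is a unit, then `1 + N` has multiplicative order exactly `p^d`. -/
theorem unitriangular_order (p d : ℕ) (hp : p.Prime) (hd : 1 ≤ d)
    (R : Type*) [CommRing R] [Nontrivial R] [CharP R (p ^ d)]
    (n : ℕ) (hn : 1 ≤ n) (hnp : n ≤ p) :
    (∀ M : Matrix (Fin n) (Fin n) R,
      (∀ j, M j j = 1) → (∀ j k : Fin n, (k : ℕ) < (j : ℕ) → M j k = 0) →
      M ^ p ^ d = 1) ∧
    (∀ (N : Matrix (Fin n) (Fin n) R) (k : ℕ), 1 ≤ k → k ≤ n - 1 →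
      (∀ j j' : Fin n, (j' : ℕ) < (j : ℕ) + k → N j j' = 0) →
      (∃ j j' : Fin n, (j' : ℕ) = (j : ℕ) + k ∧ IsUnit (N j j')) →
      orderOf (1 + N) = p ^ d) :=
  unitriangular_order_general p d hp hd R n hnp
end

section
/- Let p be a prime, let H be a finite elementary abelian p-group (a finite commutative group with h^p = 1 for all h ∈ H), let r ≥ 1, and let σ₁, …, σ_r be automorphisms of H. Let H* = H ⋊ F_r be the semidirect product of H with the free group F_r on generators t₁, …, t_r acting on H via t_i ↦ σ_i. Then H* is residually p if and only if the subgroup of Aut(H) generated by σ₁, …, σ_r is a p-group. -/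
section PGroup

variable {p : ℕ} {G : Type*} [Group G]

lemma IsPGroup.exists_index_ker_eq_pow [Fact p.Prime] {P : Type*} [Group P] [Finite P]
    (hP : IsPGroup p P) (f : G →* P) : ∃ k, f.ker.index = p ^ k := by
  rw [Subgroup.index_ker]
  exact IsPGroup.iff_card.mp (hP.to_subgroup f.range)

lemma isPGroup_of_forall_pow_eq_one_of_coprime (hp : p.Prime) [Finite G]
    (h : ∀ x : G, ∀ n, n.Coprime p → x ^ n = 1 → x = 1) : IsPGroup p G := by
  intro x
  refine ⟨(orderOf x).factorization p,
    h _ _ (Nat.coprime_ordCompl hp (orderOf_pos x).ne').symm ?_⟩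
  rw [← pow_mul, Nat.ordProj_mul_ordCompl_eq_self, pow_orderOf_eq_one]

lemma IsResiduallyP.commute_of_commute_pow (hp : p.Prime) (hG : IsResiduallyP p G) {g h : G}
    {n : ℕ} (hn : n.Coprime p) (hgh : Commute (g ^ n) h) : Commute g h := by
  rw [← commutatorElement_eq_one_iff_commute]
  by_contra hne
  obtain ⟨N, hN, ⟨k, hk⟩, hgN⟩ := hG _ hne
  have hcard : Nat.card (G ⧸ N) = p ^ k := by rw [← Subgroup.index_eq_card, hk]
  have : Finite (G ⧸ N) :=
    Nat.finite_of_card_ne_zero (by rw [hcard]; exact pow_ne_zero _ hp.ne_zero)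
  let π := QuotientGroup.mk' N
  obtain ⟨m, hm⟩ := exists_pow_eq_self_of_coprime
    ((hn.pow_right k).coprime_dvd_right (hcard ▸ orderOf_dvd_natCard (π g)))
  have hcomm : Commute (π g) (π h) := by
    rw [← hm, ← map_pow]
    exact (hgh.map π).pow_left m
  apply hgN
  rw [← QuotientGroup.eq_one_iff, ← QuotientGroup.mk'_apply, map_commutatorElement,
    commutatorElement_eq_one_iff_commute]
  exact hcomm

end PGroup

namespace Matrix

variable {ι R : Type*} [Fintype ι] [LinearOrder ι] [CommRing R]

lemma IsUpperTriangular.mul_apply_self {M N : Matrix ι ι R} (hM : M.IsUpperTriangular)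
    (hN : N.IsUpperTriangular) (i : ι) : (M * N) i i = M i i * N i i := by
  rw [mul_apply, Finset.sum_eq_single i]
  · intro k _ hki
    rcases lt_or_gt_of_ne hki with h | h
    · rw [hM h, zero_mul]
    · rw [hN h, mul_zero]
  · simp

variable [DecidableEq ι]

lemma pow_card_eq_zero_of_isUpperTriangular {N : Matrix ι ι R} (hN : N.IsUpperTriangular)
    (hN0 : ∀ i, N i i = 0) : N ^ Fintype.card ι = 0 := by
  have := aeval_self_charpoly N
  rwa [charpoly_of_isUpperTriangular N hN, Finset.prod_congr rfl fun i _ => by rw [hN0 i],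
    map_zero, sub_zero, Finset.prod_const, Finset.card_univ, map_pow, Polynomial.aeval_X] at this

variable (ι R) in
def unitriangular : Subgroup (Matrix ι ι R)ˣ where
  carrier := {u | (u : Matrix ι ι R).IsUpperTriangular ∧ ∀ i, (u : Matrix ι ι R) i i = 1}
  mul_mem' := fun {u v} ⟨hu, hu1⟩ ⟨hv, hv1⟩ =>
    ⟨hu.mul hv, fun i => by rw [Units.val_mul, hu.mul_apply_self hv, hu1, hv1, one_mul]⟩
  one_mem' := ⟨blockTriangular_one, fun i => one_apply_eq i⟩
  inv_mem' := fun {u} ⟨hu, hu1⟩ => by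
    have hinv : (↑u⁻¹ : Matrix ι ι R).IsUpperTriangular := by
      rw [coe_units_inv]
      exact blockTriangular_inv_of_blockTriangular hu
    refine ⟨hinv, fun i => ?_⟩
    have := congrFun (congrFun u.mul_inv i) i
    rwa [hu.mul_apply_self hinv, hu1, one_mul, one_apply_eq] at this

lemma exists_unitriangular_val_eq {M : Matrix ι ι R} (hM : M.IsUpperTriangular)
    (h1 : ∀ i, M i i = 1) :
    ∃ u : unitriangular ι R, ((u : (Matrix ι ι R)ˣ) : Matrix ι ι R) = M :=
  have hu : IsUnit M := (isUnit_iff_isUnit_det M).mpr (by simp [det_of_isUpperTriangular hM, h1])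
  ⟨⟨hu.unit, hM, h1⟩, rfl⟩

lemma isPGroup_unitriangular [Nonempty ι] (p : ℕ) [Fact p.Prime] [CharP R p] :
    IsPGroup p (unitriangular ι R) := by
  rintro ⟨u, hu, hu1⟩
  refine ⟨Fintype.card ι, Subtype.ext (Units.ext ?_)⟩
  have hN : ((u : Matrix ι ι R) - 1) ^ Fintype.card ι = 0 :=
    pow_card_eq_zero_of_isUpperTriangular (hu.sub blockTriangular_one)
      fun i => by rw [sub_apply, hu1, one_apply_eq, sub_self]
  have key := add_pow_char_pow_of_commute (R := Matrix ι ι R) (p := p) (n := Fintype.card ι)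
    (Commute.one_left ((u : Matrix ι ι R) - 1))
  rw [add_sub_cancel, one_pow,
    pow_eq_zero_of_le (Nat.lt_pow_self (Fact.out : p.Prime).one_lt).le hN, add_zero] at key
  simpa using key

end Matrix

section PathMatrices

open Matrix

variable {R β : Type*} [Ring R] [DecidableEq β]

/-- The adjacency matrix of the edges `i → i + 1` of the path `0 → 1 → ⋯ → l.length` whose
label, the letter `l[i]`, is `y`. -/
def List.edgeMatrix (l : List β) (y : β) : Matrix (Fin (l.length + 1)) (Fin (l.length + 1)) R :=
  of fun i j => if (j : ℕ) = i + 1 ∧ l[(i : ℕ)]? = some y then 1 else 0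

variable {l : List β}

lemma vecMul_edgeMatrix_succ (v : Fin (l.length + 1) → R) (y : β) (k : Fin l.length) :
    (v ᵥ* l.edgeMatrix y) k.succ = if l[k] = y then v k.castSucc else 0 := by
  simp only [vecMul, dotProduct, List.edgeMatrix, of_apply, Fin.val_succ, add_left_inj]
  rw [Finset.sum_eq_single k.castSucc]
  · simp
  · intro i _ hi
    rw [if_neg fun h => hi (Fin.ext h.1.symm), mul_zero]
  · simp

variable (l) in
def HasLeadingOneAt (m : ℕ) (v : Fin (l.length + 1) → R) : Prop :=
  ∀ i : Fin (l.length + 1), m ≤ i → v i = if (i : ℕ) = m then 1 else 0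

lemma HasLeadingOneAt.vecMul_one_add_edgeMatrix {m : ℕ} {v : Fin (l.length + 1) → R} {y : β}
    (hv : HasLeadingOneAt l m v) (hy : l[m]? = some y) :
    HasLeadingOneAt l (m + 1) (v ᵥ* (1 + l.edgeMatrix y)) := by
  intro i hi
  obtain ⟨k, rfl⟩ := Fin.exists_succ_eq.mpr (show i ≠ 0 by rintro rfl; simp at hi)
  simp only [Fin.val_succ, add_left_inj] at hi ⊢
  rw [vecMul_add, vecMul_one, Pi.add_apply, vecMul_edgeMatrix_succ,
    hv _ (by simp; omega), if_neg (by simp; omega), zero_add, hv _ (by simpa using hi)]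
  rcases eq_or_ne (k : ℕ) m with hkm | hkm
  · subst hkm
    simp only [Fin.is_lt, getElem?_pos, Option.some.injEq] at hy
    simp [hy]
  · simp [hkm]

lemma HasLeadingOneAt.of_vecMul_one_add_edgeMatrix {m : ℕ} {v : Fin (l.length + 1) → R} {z : β}
    (hz : l[m]? ≠ some z) (hz' : l[m + 1]? ≠ some z)
    (hv : HasLeadingOneAt l (m + 1) (v ᵥ* (1 + l.edgeMatrix z))) :
    HasLeadingOneAt l (m + 1) v := by
  have key : ∀ j, ∀ k : Fin l.length, (k : ℕ) = m + j →
      v k.succ = if j = 0 then 1 else 0 := by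
    intro j
    induction j with
    | zero =>
      intro k hk
      rw [Nat.add_zero] at hk
      have := hv k.succ (by simp [hk])
      rw [vecMul_add, vecMul_one, Pi.add_apply, vecMul_edgeMatrix_succ, if_neg, add_zero] at this
      · simpa [hk] using this
      · intro h; apply hz; rw [← hk]; simpa using h
    | succ j ih =>
      intro k hk
      have := hv k.succ (by simp [hk])
      rw [vecMul_add, vecMul_one, Pi.add_apply, vecMul_edgeMatrix_succ] at this
      have hsucc : k.castSucc = (⟨m + j, by omega⟩ : Fin l.length).succ :=
        Fin.ext (by simp [hk]; omega)
      rw [hsucc, ih ⟨m + j, by omega⟩ rfl] at this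
      have hback : (if l[k] = z then (if j = 0 then (1 : R) else 0) else 0) = 0 := by
        rcases eq_or_ne j 0 with rfl | hj
        · refine if_neg fun h => hz' ?_
          rw [show m + 1 = (k : ℕ) by omega]
          simpa using h
        · simp [hj]
      rw [hback, add_zero, if_neg (by simp; omega)] at this
      simpa using this
  intro i hi
  obtain ⟨k, rfl⟩ := Fin.exists_succ_eq.mpr (show i ≠ 0 by rintro rfl; simp at hi)
  simp only [Fin.val_succ, add_left_inj] at hi ⊢
  obtain ⟨j, hj⟩ := Nat.exists_eq_add_of_le (Nat.le_of_succ_le_succ hi)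
  rw [key j k hj]
  simp [hj]

lemma FreeGroup.IsReduced.getElem?_add_one_ne {α : Type*} {l : List (α × Bool)}
    (hl : FreeGroup.IsReduced l) {m : ℕ} {y : α × Bool} (hy : l[m]? = some y) :
    l[m + 1]? ≠ some (y.1, !y.2) := by
  intro h
  have hm : m + 1 < l.length := (List.getElem?_eq_some_iff.mp h).1
  rw [FreeGroup.IsReduced, List.isChain_iff_getElem] at hl
  have := hl m hm
  simp only [List.getElem?_eq_some_iff] at hy h
  obtain ⟨_, rfl⟩ := hy
  obtain ⟨_, h⟩ := h
  rw [h] at this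
  exact Bool.not_ne_self _ (this rfl).symm

variable {α : Type*} [DecidableEq α] {l : List (α × Bool)}

lemma hasLeadingOneAt_prod_take (hl : FreeGroup.IsReduced l)
    (V : α × Bool → Matrix (Fin (l.length + 1)) (Fin (l.length + 1)) R)
    (hV : ∀ y, V y * (1 + l.edgeMatrix (y.1, !y.2)) = 1) :
    ∀ m ≤ l.length, HasLeadingOneAt l m
      (Pi.single 0 1 ᵥ* ((l.map fun y => (1 + l.edgeMatrix y) * V y).take m).prod) := by
  intro m
  induction m with
  | zero =>
    intro _ i _
    rw [List.take_zero, List.prod_nil, vecMul_one, Pi.single_apply]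
    simp only [Fin.ext_iff, Fin.val_zero]
  | succ m ih =>
    intro hm
    have hy : l[m]? = some l[m] := List.getElem?_eq_getElem (by omega)
    rw [List.prod_take_succ _ _ (by simpa using hm), List.getElem_map, ← vecMul_vecMul,
      ← vecMul_vecMul]
    refine HasLeadingOneAt.of_vecMul_one_add_edgeMatrix (z := (l[m].1, !l[m].2)) ?_
      (hl.getElem?_add_one_ne hy) ?_
    · rw [hy, ne_eq, Option.some.injEq, Prod.ext_iff, not_and]
      exact fun _ => (Bool.not_ne_self _).symm
    · rw [vecMul_vecMul, hV, vecMul_one]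
      exact (ih (by omega)).vecMul_one_add_edgeMatrix hy

lemma edgeMatrix_prod_apply_zero_last (hl : FreeGroup.IsReduced l)
    (V : α × Bool → Matrix (Fin (l.length + 1)) (Fin (l.length + 1)) R)
    (hV : ∀ y, V y * (1 + l.edgeMatrix (y.1, !y.2)) = 1) :
    ((l.map fun y => (1 + l.edgeMatrix y) * V y).prod : Matrix (Fin (l.length + 1))
      (Fin (l.length + 1)) R) 0 (Fin.last _) = 1 := by
  have := hasLeadingOneAt_prod_take hl V hV l.length le_rfl (Fin.last _) le_rfl
  simpa [List.take_of_length_le] using this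

end PathMatrices

open Matrix in
lemma exists_unitriangular_val_eq_one_add_edgeMatrix {R β : Type*} [CommRing R] [DecidableEq β]
    (l : List β) (y : β) : ∃ u : unitriangular (Fin (l.length + 1)) R,
      ((u : (Matrix (Fin (l.length + 1)) (Fin (l.length + 1)) R)ˣ) :
        Matrix (Fin (l.length + 1)) (Fin (l.length + 1)) R) = 1 + l.edgeMatrix y := by
  refine exists_unitriangular_val_eq (blockTriangular_one.add fun i j hij => ?_) fun i => ?_
  · simp only [List.edgeMatrix, of_apply, ite_eq_right_iff, and_imp]
    intro h; have : (j : ℕ) < i := hij; omega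
  · simp [List.edgeMatrix]

open Matrix in
theorem FreeGroup.isResiduallyP (p : ℕ) [Fact p.Prime] (α : Type*) :
    IsResiduallyP p (FreeGroup α) := by
  classical
  intro w hw
  set l := w.toWord
  let f := (Units.coeHom _).comp (unitriangular (Fin (l.length + 1)) (ZMod p)).subtype
  choose a ha using exists_unitriangular_val_eq_one_add_edgeMatrix (R := ZMod p) l
  -- whatever its sign, a letter `y` then acts as `(1 + E y)(1 + E y⁻¹)⁻¹`
  let ψ : FreeGroup α →* unitriangular (Fin (l.length + 1)) (ZMod p) :=
    FreeGroup.lift fun x => a (x, true) * (a (x, false))⁻¹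
  have hψ : f (ψ w) = (l.map fun y => (1 + l.edgeMatrix y) * f (a (y.1, !y.2))⁻¹).prod := by
    rw [← FreeGroup.mk_toWord (x := w), FreeGroup.lift_mk, map_list_prod, List.map_map]
    refine congrArg List.prod (List.map_congr_left fun ⟨x, b⟩ _ => ?_)
    cases b <;> simp [f, ha]
  refine ⟨ψ.ker, inferInstance, (isPGroup_unitriangular p).exists_index_ker_eq_pow ψ,
    fun hker => ?_⟩
  have hlast := edgeMatrix_prod_apply_zero_last FreeGroup.isReduced_toWord
    (fun y => f (a (y.1, !y.2))⁻¹) fun y => by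
      rw [← ha]; simp [f]
  rw [← hψ, ψ.mem_ker.mp hker, _root_.map_one, one_apply_ne] at hlast
  · exact zero_ne_one hlast
  · rw [ne_eq, Fin.ext_iff, Fin.val_zero, Fin.val_last, eq_comm, List.length_eq_zero_iff,
      FreeGroup.toWord_eq_nil_iff]
    exact hw

namespace SemidirectProduct

variable {p : ℕ} {N G : Type*} [Group N] [Group G] {φ : G →* MulAut N}

lemma commute_inl_inr_iff {n : N} {g : G} :
    Commute (inl n : N ⋊[φ] G) (inr g) ↔ φ g n = n := by
  rw [← inl_inj (φ := φ), inl_aut, map_inv, mul_inv_eq_iff_eq_mul, eq_comm]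
  rfl

lemma isPGroup_range_of_isResiduallyP (hp : p.Prime) [Finite N]
    (h : IsResiduallyP p (N ⋊[φ] G)) : IsPGroup p φ.range := by
  refine isPGroup_of_forall_pow_eq_one_of_coprime hp ?_
  rintro ⟨_, g, rfl⟩ n hn hgn
  have hgn : φ (g ^ n) = 1 := by rw [map_pow]; exact congrArg Subtype.val hgn
  refine Subtype.ext (MulEquiv.ext fun a => commute_inl_inr_iff.mp ?_)
  refine (h.commute_of_commute_pow hp hn ?_).symm
  rw [← map_pow]
  exact (commute_inl_inr_iff.mpr (by rw [hgn]; rfl)).symm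

lemma isResiduallyP (hp : p.Prime) [Finite N] (hN : IsPGroup p N) (hφ : IsPGroup p φ.range)
    (hG : IsResiduallyP p G) : IsResiduallyP p (N ⋊[φ] G) := by
  have : Fact p.Prime := ⟨hp⟩
  intro g hg
  by_cases hright : g.right = 1
  · -- `N ⋊ φ.range` is a finite `p`-group into which `N` still embeds
    let ψ : N ⋊[φ] G →* N ⋊[φ.range.subtype] φ.range :=
      map (MonoidHom.id N) φ.rangeRestrict fun _ => rfl
    have : Finite (N ⋊[φ.range.subtype] φ.range) := Finite.of_equiv _ equivProd.symm
    obtain ⟨a, ha⟩ := IsPGroup.iff_card.mp hN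
    obtain ⟨b, hb⟩ := IsPGroup.iff_card.mp hφ
    have hP : IsPGroup p (N ⋊[φ.range.subtype] φ.range) :=
      IsPGroup.of_card (n := a + b) (by rw [card, ha, hb, pow_add])
    refine ⟨ψ.ker, inferInstance, hP.exists_index_ker_eq_pow ψ,
      fun hψ => hg (SemidirectProduct.ext ?_ hright)⟩
    exact (congrArg left (ψ.mem_ker.mp hψ) :)
  · obtain ⟨M, hM, hidx, hgM⟩ := hG _ hright
    exact ⟨M.comap rightHom, hM.comap _,
      by rwa [Subgroup.index_comap_of_surjective _ rightHom_surjective], hgM⟩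

end SemidirectProduct

theorem elementaryAbelian_mappingTorus_residually_p_iff_general (p : ℕ) (hp : p.Prime)
    (H : Type*) [CommGroup H] [Finite H] (helem : ∀ h : H, h ^ p = 1)
    (r : ℕ) (σ : Fin r → MulAut H) :
    IsResiduallyP p (SemidirectProduct H (FreeGroup (Fin r)) (FreeGroup.lift σ)) ↔
      ∃ k : ℕ, Nat.card ↥(Subgroup.closure (Set.range σ)) = p ^ k := by
  have : Fact p.Prime := ⟨hp⟩
  rw [← FreeGroup.range_lift_eq_closure, ← IsPGroup.iff_card]
  exact ⟨SemidirectProduct.isPGroup_range_of_isResiduallyP hp, fun hσ =>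
    SemidirectProduct.isResiduallyP hp (fun h => ⟨1, by rw [pow_one, helem]⟩) hσ
      (FreeGroup.isResiduallyP p _)⟩

/-- Let `H` be a finite elementary abelian `p`-group and `σ₁, …, σ_r`
automorphisms of `H`. The mapping torus `H ⋊ F_r` (with the free group `F_r`
acting via `t_i ↦ σ_i`) is residually `p` if and only if the subgroup of `Aut(H)`
generated by `σ₁, …, σ_r` is a `p`-group. -/
theorem elementaryAbelian_mappingTorus_residually_p_iff (p : ℕ) (hp : p.Prime)
    (H : Type*) [CommGroup H] [Finite H] (helem : ∀ h : H, h ^ p = 1)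
    (r : ℕ) (hr : 1 ≤ r) (σ : Fin r → MulAut H) :
    IsResiduallyP p (SemidirectProduct H (FreeGroup (Fin r)) (FreeGroup.lift σ)) ↔
      ∃ k : ℕ, Nat.card ↥(Subgroup.closure (Set.range σ)) = p ^ k :=
  elementaryAbelian_mappingTorus_residually_p_iff_general p hp H helem r σ
end
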